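/- Van der Sluis theorem: Let A be an n×m full-rank matrix with n ≤ m, let E be the diagonal matrix whose i-th diagonal entry is the inverse of the 2-norm of the i-th row of A (row equilibration), and let P be any invertible diagonal n×n matrix. Then κ(EA) ≤ √n · κ(PA), where κ denotes the ratio of largest to smallest singular value. -/

import Mathlib

/-!
Let `μ_max X`, `μ_min X` be the extreme eigenvalues of `X Xᵀ` (the squared singular values),
so `κ(X)² = μ_max X / μ_min X`. Put `C = P A`; then `E A = D C` with `D = E P⁻¹` diagonal.
Since `E A` has unit rows, `μ_max (E A) ≤ tr (E A (E A)ᵀ) = n`. Every row of `C` has squared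
norm at most `μ_max C`, so every `D i i²` is at least `1 / μ_max C`, and the Rayleigh quotient of
`D C Cᵀ D` gives `μ_min (E A) ≥ μ_min C / μ_max C`. Dividing, `κ(E A)² ≤ n κ(C)²`.
-/

open Matrix

noncomputable def singVals {n m : ℕ} (A : Matrix (Fin n) (Fin m) ℝ) : Fin n → ℝ :=
  fun i => Real.sqrt ((Matrix.isHermitian_mul_conjTranspose_self A).eigenvalues i)

noncomputable def condNum {n m : ℕ} (A : Matrix (Fin n) (Fin m) ℝ) : ℝ :=
  (⨆ i, singVals A i) / (⨅ i, singVals A i)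

namespace Matrix.IsHermitian

variable {ι : Type*} [Fintype ι] [DecidableEq ι] {H : Matrix ι ι ℝ} (hH : H.IsHermitian)

local notation "U" => (hH.eigenvectorUnitary : Matrix ι ι ℝ)

lemma dotProduct_mulVec_eq_sum_eigenvalues (x : ι → ℝ) :
    x ⬝ᵥ (H *ᵥ x) = ∑ i, hH.eigenvalues i * (star U *ᵥ x) i ^ 2 := by
  conv_lhs => rw [hH.spectral_theorem, Unitary.conjStarAlgAut_apply, ← mulVec_mulVec,
    ← mulVec_mulVec, dotProduct_mulVec, ← mulVec_transpose]
  simp [star_eq_conjTranspose, conjTranspose_eq_transpose_of_trivial, dotProduct,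
    mulVec_diagonal, sq, mul_left_comm]

lemma dotProduct_self_eq_sum_sq (x : ι → ℝ) : x ⬝ᵥ x = ∑ i, (star U *ᵥ x) i ^ 2 := by
  have hx : x = U *ᵥ (star U *ᵥ x) := by
    rw [mulVec_mulVec, mem_unitaryGroup_iff.mp hH.eigenvectorUnitary.2, one_mulVec]
  nth_rewrite 2 [hx]
  rw [dotProduct_mulVec, ← mulVec_transpose]
  simp [star_eq_conjTranspose, conjTranspose_eq_transpose_of_trivial, dotProduct, sq]

lemma star_mulVec_mulVec_eigenvectorUnitary (y : ι → ℝ) : star U *ᵥ (U *ᵥ y) = y := by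
  rw [mulVec_mulVec, mem_unitaryGroup_iff'.mp hH.eigenvectorUnitary.2, one_mulVec]

lemma dotProduct_mulVec_le_iSup_eigenvalues (x : ι → ℝ) :
    x ⬝ᵥ (H *ᵥ x) ≤ (⨆ i, hH.eigenvalues i) * (x ⬝ᵥ x) := by
  rw [hH.dotProduct_mulVec_eq_sum_eigenvalues, hH.dotProduct_self_eq_sum_sq, Finset.mul_sum]
  exact Finset.sum_le_sum fun i _ =>
    mul_le_mul_of_nonneg_right (le_ciSup (Finite.bddAbove_range _) i) (sq_nonneg _)

lemma iInf_eigenvalues_mul_le_dotProduct_mulVec (x : ι → ℝ) :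
    (⨅ i, hH.eigenvalues i) * (x ⬝ᵥ x) ≤ x ⬝ᵥ (H *ᵥ x) := by
  rw [hH.dotProduct_mulVec_eq_sum_eigenvalues, hH.dotProduct_self_eq_sum_sq, Finset.mul_sum]
  exact Finset.sum_le_sum fun i _ =>
    mul_le_mul_of_nonneg_right (ciInf_le (Finite.bddBelow_range _) i) (sq_nonneg _)

lemma le_eigenvalues_of_forall_le_dotProduct_mulVec {c : ℝ}
    (hc : ∀ x, c * (x ⬝ᵥ x) ≤ x ⬝ᵥ (H *ᵥ x)) (j : ι) : c ≤ hH.eigenvalues j := by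
  have h := hc (U *ᵥ Pi.single j 1)
  rw [hH.dotProduct_mulVec_eq_sum_eigenvalues, hH.dotProduct_self_eq_sum_sq,
    hH.star_mulVec_mulVec_eigenvectorUnitary] at h
  simpa [Pi.single_apply] using h

end Matrix.IsHermitian

namespace Matrix

variable {ι κ : Type*} [Fintype κ]

lemma mul_conjTranspose_self_apply_self (A : Matrix ι κ ℝ) (i : ι) :
    (A * Aᴴ) i i = ∑ j, A i j ^ 2 := by
  simp [mul_apply, sq]

lemma single_one_dotProduct_mulVec_single_one {R : Type*} [NonAssocSemiring R] [Fintype ι]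
    [DecidableEq ι] (M : Matrix ι ι R) (i : ι) :
    Pi.single i 1 ⬝ᵥ (M *ᵥ Pi.single i 1) = M i i := by
  rw [single_one_dotProduct, mulVec_single_one]
  rfl

variable [Fintype ι] [DecidableEq ι]

noncomputable def sqSingVals (A : Matrix ι κ ℝ) : ι → ℝ :=
  (isHermitian_mul_conjTranspose_self A).eigenvalues

lemma sqSingVals_nonneg (A : Matrix ι κ ℝ) (i : ι) : 0 ≤ A.sqSingVals i :=
  eigenvalues_self_mul_conjTranspose_nonneg A i

lemma sum_sq_le_iSup_sqSingVals (A : Matrix ι κ ℝ) (i : ι) :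
    ∑ j, A i j ^ 2 ≤ ⨆ k, A.sqSingVals k := by
  have h := (isHermitian_mul_conjTranspose_self A).dotProduct_mulVec_le_iSup_eigenvalues
    (Pi.single i 1)
  rwa [single_one_dotProduct_mulVec_single_one, mul_conjTranspose_self_apply_self,
    single_one_dotProduct, Pi.single_eq_same, mul_one] at h

lemma iInf_sqSingVals_le_sum_sq (A : Matrix ι κ ℝ) (i : ι) :
    ⨅ k, A.sqSingVals k ≤ ∑ j, A i j ^ 2 := by
  have h := (isHermitian_mul_conjTranspose_self A).iInf_eigenvalues_mul_le_dotProduct_mulVec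
    (Pi.single i 1)
  rwa [single_one_dotProduct_mulVec_single_one, mul_conjTranspose_self_apply_self,
    single_one_dotProduct, Pi.single_eq_same, mul_one] at h

lemma iSup_sqSingVals_le_sum_sum_sq [Nonempty ι] (A : Matrix ι κ ℝ) :
    ⨆ k, A.sqSingVals k ≤ ∑ i, ∑ j, A i j ^ 2 := by
  obtain ⟨k, hk⟩ := exists_eq_ciSup_of_finite (f := A.sqSingVals)
  calc ⨆ k, A.sqSingVals k = A.sqSingVals k := hk.symm
    _ ≤ ∑ k, A.sqSingVals k :=
      Finset.single_le_sum (fun k _ => A.sqSingVals_nonneg k) (Finset.mem_univ k)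
    _ = (A * Aᴴ).trace := by
      rw [(isHermitian_mul_conjTranspose_self A).trace_eq_sum_eigenvalues]; rfl
    _ = ∑ i, ∑ j, A i j ^ 2 := by simp only [trace, diag, mul_conjTranspose_self_apply_self]

lemma iInf_sqSingVals_pos [Nonempty ι] (A : Matrix ι κ ℝ) (hA : A.rank = Fintype.card ι) :
    0 < ⨅ k, A.sqSingVals k := by
  obtain ⟨k, hk⟩ := exists_eq_ciInf_of_finite (f := A.sqSingVals)
  rw [← hk]
  refine (A.sqSingVals_nonneg k).lt_of_ne fun h0 => ?_
  have hcard := (isHermitian_mul_conjTranspose_self A).rank_eq_card_non_zero_eigs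
  rw [rank_self_mul_conjTranspose, hA] at hcard
  exact (Fintype.card_subtype_lt (p := fun i => A.sqSingVals i ≠ 0) (x := k) (by simp [h0])).ne
    hcard.symm

lemma sum_sq_pos_of_rank_eq_card [Nonempty ι] (A : Matrix ι κ ℝ)
    (hA : A.rank = Fintype.card ι) (i : ι) : 0 < ∑ j, A i j ^ 2 :=
  (A.iInf_sqSingVals_pos hA).trans_le (A.iInf_sqSingVals_le_sum_sq i)

lemma mul_iInf_sqSingVals_le_iInf_sqSingVals_diagonal_mul [Nonempty ι] (C : Matrix ι κ ℝ)
    {d : ι → ℝ} {c : ℝ} (hc : ∀ i, c ≤ d i ^ 2) :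
    c * ⨅ k, C.sqSingVals k ≤ ⨅ k, (diagonal d * C).sqSingVals k := by
  have hIC : 0 ≤ ⨅ k, C.sqSingVals k := le_ciInf C.sqSingVals_nonneg
  refine le_ciInf <|
    (isHermitian_mul_conjTranspose_self _).le_eigenvalues_of_forall_le_dotProduct_mulVec fun x => ?_
  have hDx : c * (x ⬝ᵥ x) ≤ (d * x) ⬝ᵥ (d * x) := by
    simp only [dotProduct, Finset.mul_sum]
    exact Finset.sum_le_sum fun i _ => by
      simp only [Pi.mul_apply]
      linear_combination mul_le_mul_of_nonneg_right (hc i) (mul_self_nonneg (x i))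
  have hform : x ⬝ᵥ ((diagonal d * C) * (diagonal d * C)ᴴ) *ᵥ x
      = (d * x) ⬝ᵥ ((C * Cᴴ) *ᵥ (d * x)) := by
    have hvec : x ᵥ* diagonal d = d * x := funext fun i => by simp [vecMul_diagonal, mul_comm]
    have hmul : diagonal d *ᵥ x = d * x := funext fun i => by simp [mulVec_diagonal]
    rw [conjTranspose_mul, diagonal_conjTranspose, star_trivial, ← Matrix.mul_assoc,
      ← mulVec_mulVec, Matrix.mul_assoc, ← mulVec_mulVec, dotProduct_mulVec, hvec, hmul]
  calc c * (⨅ k, C.sqSingVals k) * (x ⬝ᵥ x)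
      = (⨅ k, C.sqSingVals k) * (c * (x ⬝ᵥ x)) := by ring
    _ ≤ (⨅ k, C.sqSingVals k) * ((d * x) ⬝ᵥ (d * x)) := mul_le_mul_of_nonneg_left hDx hIC
    _ ≤ (d * x) ⬝ᵥ ((C * Cᴴ) *ᵥ (d * x)) :=
      (isHermitian_mul_conjTranspose_self C).iInf_eigenvalues_mul_le_dotProduct_mulVec _
    _ = _ := hform.symm

theorem iSup_div_iInf_sqSingVals_diagonal_mul_le [Nonempty ι] (C : Matrix ι κ ℝ)
    (hC : C.rank = Fintype.card ι) (d : ι → ℝ) (hd : ∀ i, d i ^ 2 * ∑ j, C i j ^ 2 = 1) :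
    (⨆ k, (diagonal d * C).sqSingVals k) / (⨅ k, (diagonal d * C).sqSingVals k) ≤
      Fintype.card ι * ((⨆ k, C.sqSingVals k) / ⨅ k, C.sqSingVals k) := by
  set S := ⨆ k, C.sqSingVals k
  set I := ⨅ k, C.sqSingVals k
  have hI : 0 < I := C.iInf_sqSingVals_pos hC
  have hS : 0 < S :=
    hI.trans_le (ciInf_le_ciSup (Finite.bddBelow_range _) (Finite.bddAbove_range _))
  have hsup : ⨆ k, (diagonal d * C).sqSingVals k ≤ Fintype.card ι := by
    refine (iSup_sqSingVals_le_sum_sum_sq _).trans_eq ?_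
    simp [diagonal_mul, mul_pow, ← Finset.mul_sum, hd]
  have hinf : I / S ≤ ⨅ k, (diagonal d * C).sqSingVals k := by
    rw [div_eq_inv_mul]
    refine mul_iInf_sqSingVals_le_iInf_sqSingVals_diagonal_mul C fun i => ?_
    have hrow := C.sum_sq_pos_of_rank_eq_card hC i
    rw [← mul_inv_cancel_right₀ hrow.ne' (d i ^ 2), hd, one_mul]
    exact inv_anti₀ hrow (C.sum_sq_le_iSup_sqSingVals i)
  calc (⨆ k, (diagonal d * C).sqSingVals k) / (⨅ k, (diagonal d * C).sqSingVals k)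
      ≤ Fintype.card ι / (I / S) := div_le_div₀ (by positivity) hsup (by positivity) hinf
    _ = Fintype.card ι * (S / I) := by rw [div_div_eq_mul_div, mul_div_assoc]

end Matrix

lemma condNum_eq_sqrt_div {n m : ℕ} [NeZero n] (A : Matrix (Fin n) (Fin m) ℝ) :
    condNum A = √((⨆ i, A.sqSingVals i) / ⨅ i, A.sqSingVals i) := by
  rw [condNum, Real.sqrt_div' _ (le_ciInf A.sqSingVals_nonneg),
    Finite.map_iSup_of_monotone _ fun _ _ => Real.sqrt_le_sqrt,
    Finite.map_iInf_of_monotone _ fun _ _ => Real.sqrt_le_sqrt]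
  rfl

theorem van_der_sluis_general {n m : ℕ} [NeZero n]
    (A : Matrix (Fin n) (Fin m) ℝ) (hrank : A.rank = n)
    (E : Matrix (Fin n) (Fin n) ℝ)
    (hE : E = Matrix.diagonal fun i => (Real.sqrt (∑ j, A i j ^ 2))⁻¹)
    (p : Fin n → ℝ) (hp : ∀ i, p i ≠ 0) :
    condNum (E * A) ≤ Real.sqrt n * condNum (Matrix.diagonal p * A) := by
  replace hrank : A.rank = Fintype.card (Fin n) := hrank.trans (Fintype.card_fin n).symm
  set C := diagonal p * A
  set d : Fin n → ℝ := fun i => (√(∑ j, A i j ^ 2))⁻¹ / p i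
  have hEA : E * A = diagonal d * C := by
    rw [hE, ← Matrix.mul_assoc, diagonal_mul_diagonal]
    congr; ext i; exact (div_mul_cancel₀ _ (hp i)).symm
  have hC : C.rank = Fintype.card (Fin n) := by
    have hP : IsUnit (diagonal p).det := by
      simpa [isUnit_iff_ne_zero, Finset.prod_ne_zero_iff] using hp
    rw [rank_mul_eq_right_of_isUnit_det _ _ hP, hrank]
  have hd : ∀ i, d i ^ 2 * ∑ j, C i j ^ 2 = 1 := fun i => by
    have hA := A.sum_sq_pos_of_rank_eq_card hrank i
    simp only [C, d, diagonal_mul, mul_pow, ← Finset.mul_sum, div_pow, inv_pow,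
      Real.sq_sqrt hA.le]
    field_simp [hp i]
  rw [hEA, condNum_eq_sqrt_div, condNum_eq_sqrt_div, ← Real.sqrt_mul (Nat.cast_nonneg _)]
  simpa using Real.sqrt_le_sqrt (iSup_div_iInf_sqSingVals_diagonal_mul_le C hC d hd)

theorem van_der_sluis {n m : ℕ} [NeZero n] (hnm : n ≤ m)
    (A : Matrix (Fin n) (Fin m) ℝ) (hrank : A.rank = n)
    (E : Matrix (Fin n) (Fin n) ℝ)
    (hE : E = Matrix.diagonal fun i => (Real.sqrt (∑ j, A i j ^ 2))⁻¹)
    (p : Fin n → ℝ) (hp : ∀ i, p i ≠ 0) :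
    condNum (E * A) ≤ Real.sqrt n * condNum (Matrix.diagonal p * A) :=
  van_der_sluis_general A hrank E hE p hp
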